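/- arXiv:2308.13468 — 2 statements merged into one kernel-verified Lean document; each statement's English description precedes it below -/
import Mathlib

section
/- With F as above, the vector field is locally Lipschitz: ‖X_F(r) - X_F(r')‖_{ℓ¹} ≤ C(d) [[F]] (‖r‖_{ℓ¹} + ‖r'‖_{ℓ¹})^{d-1} ‖r - r'‖_{ℓ¹} for all r, r' ∈ ℓ¹(ℤ²). -/
open scoped ENNReal NNReal
open Finset

/-- The monomial factor `∏ᵢ r^{σᵢ}_{kᵢ}` (with `r⁺ = r`, `r⁻ = r̄`). -/
noncomputable def monFactor (d : ℕ) (r : ℤ × ℤ → ℂ) (σ : Fin d → Bool) (k : Fin d → ℤ × ℤ) : ℂ :=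
  ∏ i, if σ i then r (k i) else (starRingEnd ℂ) (r (k i))

/-- The Hamiltonian vector field of a momentum-preserving homogeneous
Hamiltonian of degree `d+1`, with coefficients `G`. -/
noncomputable def XF (d : ℕ) (G : (ℤ × ℤ) → (Fin d → Bool) → (Fin d → ℤ × ℤ) → ℂ)
    (r : ℤ × ℤ → ℂ) (n : ℤ × ℤ) : ℂ :=
  ∑' σ : Fin d → Bool, ∑' k : Fin d → ℤ × ℤ, G n σ k * monFactor d r σ k

lemma tsum_pi_prod {α : Type*} : ∀ (d : ℕ) (w : Fin d → α → ℝ≥0∞),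
    ∑' k : Fin d → α, ∏ i, w i (k i) = ∏ i, ∑' x, w i x := by
  intro d
  induction d with
  | zero =>
    intro w
    have : Unique (Fin 0 → α) := ⟨⟨fun i => i.elim0⟩, fun f => funext fun i => i.elim0⟩
    simp [tsum_eq_single (α := ℝ≥0∞) (default : Fin 0 → α)
      (fun b hb => absurd (Subsingleton.elim b default) hb)]
  | succ d ih =>
    intro w
    rw [← ((Fin.consEquiv (fun _ : Fin (d+1) => α)).tsum_eq
      (fun k : Fin (d+1) → α => ∏ i, w i (k i)))]
    have : ∀ p : α × (Fin d → α),
        (∏ i, w i ((Fin.consEquiv (fun _ : Fin (d+1) => α)) p i))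
          = w 0 p.1 * ∏ i : Fin d, w i.succ (p.2 i) := by
      intro p
      rw [Fin.prod_univ_succ]
      simp [Fin.consEquiv]
    simp only [this]
    rw [ENNReal.tsum_prod']
    simp only [ENNReal.tsum_mul_left]
    rw [ih, ENNReal.tsum_mul_right, Fin.prod_univ_succ]

lemma prod_ite_head {M : Type*} [CommMonoid M] {d : ℕ} (j : Fin d) (c b : Fin d → M) :
    ∏ i, (if i = j then c i else b i) = c j * ∏ i, (if i = j then (1:M) else b i) := by
  rw [← Finset.mul_prod_erase Finset.univ _ (Finset.mem_univ j),
      ← Finset.mul_prod_erase Finset.univ (fun i => if i = j then (1:M) else b i)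
        (Finset.mem_univ j), if_pos rfl, if_pos rfl, one_mul]
  exact congrArg _ (Finset.prod_congr rfl fun x hx => by
    simp [(Finset.mem_erase.1 hx).1])

lemma nnnorm_prod_sub_prod_le : ∀ (d : ℕ) (f g : Fin d → ℂ),
    (‖∏ i, f i - ∏ i, g i‖₊ : ℝ≥0∞) ≤
      ∑ j, (‖f j - g j‖₊ : ℝ≥0∞) *
        ∏ i, (if i = j then 1 else (‖f i‖₊ + ‖g i‖₊ : ℝ≥0∞)) := by
  intro d
  induction d with
  | zero => intro f g; simp
  | succ d ih =>
    intro f g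
    have key : ∏ i, f i - ∏ i, g i
        = (f 0 - g 0) * ∏ i : Fin d, f i.succ
          + g 0 * (∏ i : Fin d, f i.succ - ∏ i : Fin d, g i.succ) := by
      rw [Fin.prod_univ_succ f, Fin.prod_univ_succ g]; ring
    rw [key]
    have h1 : (‖(f 0 - g 0) * ∏ i : Fin d, f i.succ‖₊ : ℝ≥0∞)
        ≤ (‖f 0 - g 0‖₊ : ℝ≥0∞) * ∏ i : Fin d, (‖f i.succ‖₊ + ‖g i.succ‖₊ : ℝ≥0∞) := by
      rw [nnnorm_mul, ENNReal.coe_mul, nnnorm_prod, ENNReal.coe_finset_prod]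
      gcongr with i
      exact le_self_add
    have h2 : (‖g 0 * (∏ i : Fin d, f i.succ - ∏ i : Fin d, g i.succ)‖₊ : ℝ≥0∞)
        ≤ (‖f 0‖₊ + ‖g 0‖₊ : ℝ≥0∞) *
          ∑ j : Fin d, (‖f j.succ - g j.succ‖₊ : ℝ≥0∞) *
            ∏ i : Fin d, (if i = j then 1 else (‖f i.succ‖₊ + ‖g i.succ‖₊ : ℝ≥0∞)) := by
      rw [nnnorm_mul, ENNReal.coe_mul]
      exact mul_le_mul' le_add_self (ih _ _)
    calc (‖_ + _‖₊ : ℝ≥0∞)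
        ≤ (‖(f 0 - g 0) * ∏ i : Fin d, f i.succ‖₊ : ℝ≥0∞)
          + (‖g 0 * (∏ i : Fin d, f i.succ - ∏ i : Fin d, g i.succ)‖₊ : ℝ≥0∞) := by
          exact_mod_cast nnnorm_add_le _ _
      _ ≤ (‖f 0 - g 0‖₊ : ℝ≥0∞) * ∏ i : Fin d, (‖f i.succ‖₊ + ‖g i.succ‖₊ : ℝ≥0∞)
          + (‖f 0‖₊ + ‖g 0‖₊ : ℝ≥0∞) *
            ∑ j : Fin d, (‖f j.succ - g j.succ‖₊ : ℝ≥0∞) *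
              ∏ i : Fin d, (if i = j then 1 else (‖f i.succ‖₊ + ‖g i.succ‖₊ : ℝ≥0∞)) :=
          add_le_add h1 h2
      _ ≤ ∑ j, (‖f j - g j‖₊ : ℝ≥0∞) *
            ∏ i, (if i = j then 1 else (‖f i‖₊ + ‖g i‖₊ : ℝ≥0∞)) := by
          rw [Fin.sum_univ_succ, Finset.mul_sum]
          refine add_le_add (le_of_eq ?_) (Finset.sum_le_sum fun j _ => le_of_eq ?_)
          · rw [Fin.prod_univ_succ]
            simp [Fin.succ_ne_zero]
          · rw [Fin.prod_univ_succ]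
            have h0 : ((0 : Fin (d+1)) = j.succ) = False :=
              eq_false (Fin.succ_ne_zero j).symm
            simp only [Fin.succ_inj, h0, if_false]
            ring


lemma monFactor_norm (d : ℕ) (r : ℤ × ℤ → ℂ) (σ : Fin d → Bool) (k : Fin d → ℤ × ℤ) :
    ‖monFactor d r σ k‖ = ∏ i, ‖r (k i)‖ := by
  rw [monFactor, norm_prod]
  exact Finset.prod_congr rfl fun i _ => by
    by_cases h : σ i <;> simp [h]

lemma summable_nnnorm {r : ℤ × ℤ → ℂ} (hr : Summable fun n => ‖r n‖) :
    Summable fun n => ‖r n‖₊ := by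
  rw [← NNReal.summable_coe]; exact hr

lemma tsum_nnnorm_ne_top {r : ℤ × ℤ → ℂ} (hr : Summable fun n => ‖r n‖) :
    (∑' n, (‖r n‖₊ : ℝ≥0∞)) ≠ ⊤ :=
  ENNReal.tsum_coe_ne_top_iff_summable.2 (summable_nnnorm hr)

lemma tsum_prod_nnnorm (d : ℕ) (r : ℤ × ℤ → ℂ) :
    ∑' k : Fin d → ℤ × ℤ, ∏ i, (‖r (k i)‖₊ : ℝ≥0∞)
      = (∑' n, (‖r n‖₊ : ℝ≥0∞)) ^ d := by
  rw [tsum_pi_prod d (fun _ x => (‖r x‖₊ : ℝ≥0∞))]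
  simp [Finset.prod_const]

lemma summable_prod_norm {d : ℕ} {r : ℤ × ℤ → ℂ} (hr : Summable fun n => ‖r n‖) :
    Summable fun k : Fin d → ℤ × ℤ => ∏ i, ‖r (k i)‖ := by
  have h1 : Summable fun k : Fin d → ℤ × ℤ => ∏ i, ‖r (k i)‖₊ := by
    rw [← ENNReal.tsum_coe_ne_top_iff_summable]
    have : ∀ k : Fin d → ℤ × ℤ, ((∏ i, ‖r (k i)‖₊ : ℝ≥0) : ℝ≥0∞)
        = ∏ i, (‖r (k i)‖₊ : ℝ≥0∞) := fun k => by push_cast; rfl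
    rw [tsum_congr this, tsum_prod_nnnorm]
    exact ENNReal.pow_ne_top (tsum_nnnorm_ne_top hr)
  rw [← NNReal.summable_coe] at h1
  convert h1 using 2 with k
  push_cast; rfl

lemma summable_Gmon {d : ℕ} (G : (ℤ × ℤ) → (Fin d → Bool) → (Fin d → ℤ × ℤ) → ℂ)
    {A : ℝ} (hA : ∀ n σ k, ‖G n σ k‖ ≤ A) (n : ℤ × ℤ) (σ : Fin d → Bool)
    {r : ℤ × ℤ → ℂ} (hr : Summable fun n => ‖r n‖) :
    Summable fun k : Fin d → ℤ × ℤ => ‖G n σ k * monFactor d r σ k‖ := by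
  refine Summable.of_nonneg_of_le (fun k => norm_nonneg _) (fun k => ?_)
    ((summable_prod_norm hr).mul_left A)
  rw [norm_mul, monFactor_norm]
  exact mul_le_mul_of_nonneg_right (hA n σ k)
    (Finset.prod_nonneg fun i _ => norm_nonneg _)
lemma XF_sub (d : ℕ) (G : (ℤ × ℤ) → (Fin d → Bool) → (Fin d → ℤ × ℤ) → ℂ)
    {A : ℝ} (hA : ∀ n σ k, ‖G n σ k‖ ≤ A) (n : ℤ × ℤ)
    {r r' : ℤ × ℤ → ℂ} (hr : Summable fun n => ‖r n‖) (hr' : Summable fun n => ‖r' n‖)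
    (hsum : ∀ (s : ℤ × ℤ → ℂ), Summable (fun n => ‖s n‖) → ∀ σ,
      Summable fun k : Fin d → ℤ × ℤ => ‖G n σ k * monFactor d s σ k‖) :
    XF d G r n - XF d G r' n
      = ∑ σ : Fin d → Bool, ∑' k : Fin d → ℤ × ℤ,
          G n σ k * (monFactor d r σ k - monFactor d r' σ k) := by
  rw [XF, XF, tsum_fintype, tsum_fintype, ← Finset.sum_sub_distrib]
  refine Finset.sum_congr rfl fun σ _ => ?_
  rw [← Summable.tsum_sub (Summable.of_norm (hsum r hr σ)) (Summable.of_norm (hsum r' hr' σ))]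
  exact tsum_congr fun k => by ring

lemma XF_sub_nnnorm (d : ℕ) (G : (ℤ × ℤ) → (Fin d → Bool) → (Fin d → ℤ × ℤ) → ℂ)
    {A : ℝ} (hA : ∀ n σ k, ‖G n σ k‖ ≤ A) (n : ℤ × ℤ)
    {r r' : ℤ × ℤ → ℂ} (hr : Summable fun n => ‖r n‖) (hr' : Summable fun n => ‖r' n‖)
    (hsum : ∀ (s : ℤ × ℤ → ℂ), Summable (fun n => ‖s n‖) → ∀ σ,
      Summable fun k : Fin d → ℤ × ℤ => ‖G n σ k * monFactor d s σ k‖) :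
    (‖XF d G r n - XF d G r' n‖₊ : ℝ≥0∞)
      ≤ ∑ σ : Fin d → Bool, ∑' k : Fin d → ℤ × ℤ,
          (‖G n σ k‖₊ : ℝ≥0∞) * ‖monFactor d r σ k - monFactor d r' σ k‖₊ := by
  rw [XF_sub d G hA n hr hr' hsum]
  have hsnn : ∀ σ, Summable fun k : Fin d → ℤ × ℤ =>
      ‖G n σ k * (monFactor d r σ k - monFactor d r' σ k)‖₊ := by
    intro σ
    rw [← NNReal.summable_coe]
    refine Summable.of_nonneg_of_le (fun k => by positivity) (fun k => ?_)
      ((hsum r hr σ).add (hsum r' hr' σ))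
    push_cast [coe_nnnorm]
    calc ‖G n σ k * (monFactor d r σ k - monFactor d r' σ k)‖
        = ‖G n σ k * monFactor d r σ k - G n σ k * monFactor d r' σ k‖ := by ring_nf
      _ ≤ _ := norm_sub_le _ _
  calc (‖∑ σ : Fin d → Bool, ∑' k : Fin d → ℤ × ℤ,
          G n σ k * (monFactor d r σ k - monFactor d r' σ k)‖₊ : ℝ≥0∞)
      ≤ ∑ σ : Fin d → Bool, (‖∑' k : Fin d → ℤ × ℤ,
          G n σ k * (monFactor d r σ k - monFactor d r' σ k)‖₊ : ℝ≥0∞) := by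
        rw [← ENNReal.coe_finset_sum]
        exact_mod_cast nnnorm_sum_le _ _
    _ ≤ _ := by
        refine Finset.sum_le_sum fun σ _ => ?_
        calc (‖∑' k : Fin d → ℤ × ℤ,
                G n σ k * (monFactor d r σ k - monFactor d r' σ k)‖₊ : ℝ≥0∞)
            ≤ ((∑' k : Fin d → ℤ × ℤ,
                ‖G n σ k * (monFactor d r σ k - monFactor d r' σ k)‖₊ : ℝ≥0) : ℝ≥0∞) := by
              exact_mod_cast nnnorm_tsum_le (hsnn σ)
          _ = ∑' k : Fin d → ℤ × ℤ,
                (‖G n σ k * (monFactor d r σ k - monFactor d r' σ k)‖₊ : ℝ≥0∞) :=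
              ENNReal.coe_tsum (hsnn σ)
          _ = _ := tsum_congr fun k => by rw [nnnorm_mul, ENNReal.coe_mul]

lemma prod_ite_const {d : ℕ} (j : Fin d) (a b : ℝ≥0∞) :
    ∏ i, (if i = j then a else b) = a * b ^ (d - 1) := by
  rw [prod_ite_head j (fun _ => a) (fun _ => b)]
  congr 1
  rw [← Finset.mul_prod_erase Finset.univ _ (Finset.mem_univ j), if_pos rfl, one_mul,
    Finset.prod_congr rfl (fun x hx => if_neg (Finset.mem_erase.1 hx).1),
    Finset.prod_const, Finset.card_erase_of_mem (Finset.mem_univ j), Finset.card_univ,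
    Fintype.card_fin]

lemma tsum_monFactor_sub (d : ℕ) (σ : Fin d → Bool) (r r' : ℤ × ℤ → ℂ) :
    ∑' k : Fin d → ℤ × ℤ, (‖monFactor d r σ k - monFactor d r' σ k‖₊ : ℝ≥0∞)
      ≤ d * ((∑' n, (‖r n - r' n‖₊ : ℝ≥0∞))
          * ((∑' n, (‖r n‖₊ : ℝ≥0∞)) + ∑' n, (‖r' n‖₊ : ℝ≥0∞)) ^ (d - 1)) := by
  set w : Fin d → Fin d → (ℤ × ℤ) → ℝ≥0∞ := fun j i x =>
    if i = j then (‖r x - r' x‖₊ : ℝ≥0∞) else ((‖r x‖₊ : ℝ≥0∞) + ‖r' x‖₊) with hw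
  have step1 : ∀ k : Fin d → ℤ × ℤ,
      (‖monFactor d r σ k - monFactor d r' σ k‖₊ : ℝ≥0∞)
        ≤ ∑ j, ∏ i, w j i (k i) := by
    intro k
    rw [monFactor, monFactor]
    refine le_trans (nnnorm_prod_sub_prod_le d _ _) (Finset.sum_le_sum fun j _ => le_of_eq ?_)
    have hc : ∀ i, (‖(if σ i then r (k i) else (starRingEnd ℂ) (r (k i)))
        - (if σ i then r' (k i) else (starRingEnd ℂ) (r' (k i)))‖₊ : ℝ≥0∞)
        = (‖r (k i) - r' (k i)‖₊ : ℝ≥0∞) := fun i => by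
      by_cases h : σ i <;> simp [h, ← map_sub]
    have hb : ∀ i, (‖(if σ i then r (k i) else (starRingEnd ℂ) (r (k i)))‖₊ : ℝ≥0∞)
        = (‖r (k i)‖₊ : ℝ≥0∞) := fun i => by
      by_cases h : σ i <;> simp [h]
    have hb' : ∀ i, (‖(if σ i then r' (k i) else (starRingEnd ℂ) (r' (k i)))‖₊ : ℝ≥0∞)
        = (‖r' (k i)‖₊ : ℝ≥0∞) := fun i => by
      by_cases h : σ i <;> simp [h]
    rw [hc j]
    rw [show (∏ i, w j i (k i)) = (‖r (k j) - r' (k j)‖₊ : ℝ≥0∞) *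
        ∏ i, (if i = j then 1 else ((‖r (k i)‖₊ : ℝ≥0∞) + ‖r' (k i)‖₊)) from
      prod_ite_head j _ _]
    congr 1
    exact Finset.prod_congr rfl fun i _ => by rw [hb i, hb' i]
  calc ∑' k : Fin d → ℤ × ℤ, (‖monFactor d r σ k - monFactor d r' σ k‖₊ : ℝ≥0∞)
      ≤ ∑' k : Fin d → ℤ × ℤ, ∑ j, ∏ i, w j i (k i) := ENNReal.tsum_le_tsum step1
    _ = ∑ j, ∑' k : Fin d → ℤ × ℤ, ∏ i, w j i (k i) :=
        Summable.tsum_finsetSum fun j _ => ENNReal.summable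
    _ = ∑ j : Fin d, ∏ i, ∑' x, w j i x := Finset.sum_congr rfl fun j _ => tsum_pi_prod d _
    _ = ∑ j : Fin d, (∑' n, (‖r n - r' n‖₊ : ℝ≥0∞))
          * ((∑' n, (‖r n‖₊ : ℝ≥0∞)) + ∑' n, (‖r' n‖₊ : ℝ≥0∞)) ^ (d - 1) := by
        refine Finset.sum_congr rfl fun j _ => ?_
        rw [← prod_ite_const j]
        refine Finset.prod_congr rfl fun i _ => ?_
        by_cases h : i = j <;> simp [hw, h, ENNReal.tsum_add]
    _ = _ := by rw [Finset.sum_const, Finset.card_univ, Fintype.card_fin, nsmul_eq_mul]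

/-- Local Lipschitz estimate:
`‖X_F(r) - X_F(r')‖_{ℓ¹} ≤ C(d) [[F]] (‖r‖+‖r'‖)^{d-1} ‖r-r'‖_{ℓ¹}`. -/
theorem stmt9 (d : ℕ) (hd : 1 ≤ d) :
    ∃ C > (0 : ℝ),
      ∀ (G : (ℤ × ℤ) → (Fin d → Bool) → (Fin d → ℤ × ℤ) → ℂ) (A : ℝ),
        (∀ n σ k, ‖G n σ k‖ ≤ A) →
        (∀ n σ k, G n σ k ≠ 0 →
          (∑ i, (if σ i then k i else -k i)) = n) →
        ∀ r r' : ℤ × ℤ → ℂ, Summable (fun n => ‖r n‖) →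
          Summable (fun n => ‖r' n‖) →
          ∑' n : ℤ × ℤ, ‖XF d G r n - XF d G r' n‖
            ≤ C * A * ((∑' n : ℤ × ℤ, ‖r n‖) + ∑' n : ℤ × ℤ, ‖r' n‖) ^ (d - 1)
              * ∑' n : ℤ × ℤ, ‖r n - r' n‖ := by
  refine ⟨((2 ^ d * d : ℕ) : ℝ), by positivity, ?_⟩
  intro G A hA hG r r' hr hr'
  have hA0 : 0 ≤ A := le_trans (norm_nonneg _) (hA 0 (fun _ => true) (fun _ => 0))
  set a : ℝ≥0 := ⟨A, hA0⟩ with ha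
  have haG : ∀ n σ k, (‖G n σ k‖₊ : ℝ≥0∞) ≤ (a : ℝ≥0∞) := by
    intro n σ k
    rw [ENNReal.coe_le_coe, ← NNReal.coe_le_coe, coe_nnnorm]
    exact hA n σ k
  have hrr' : Summable fun n => ‖r n - r' n‖ :=
    Summable.of_nonneg_of_le (fun n => norm_nonneg _) (fun n => norm_sub_le _ _) (hr.add hr')
  set N : ℝ≥0∞ := ∑' n, (‖r n‖₊ : ℝ≥0∞) with hNdef
  set N' : ℝ≥0∞ := ∑' n, (‖r' n‖₊ : ℝ≥0∞) with hN'def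
  set D : ℝ≥0∞ := ∑' n, (‖r n - r' n‖₊ : ℝ≥0∞) with hDdef
  have hN : N ≠ ⊤ := tsum_nnnorm_ne_top hr
  have hN' : N' ≠ ⊤ := tsum_nnnorm_ne_top hr'
  have hD : D ≠ ⊤ := tsum_nnnorm_ne_top hrr'
  set S : ℝ≥0∞ := N + N' with hSdef
  have hS : S ≠ ⊤ := ENNReal.add_ne_top.2 ⟨hN, hN'⟩
  have hsumf : ∀ n (s : ℤ × ℤ → ℂ), Summable (fun m => ‖s m‖) → ∀ σ,
      Summable fun k : Fin d → ℤ × ℤ => ‖G n σ k * monFactor d s σ k‖ :=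
    fun n s hs σ => summable_Gmon G hA n σ hs
  -- momentum step
  have hmom : ∀ (σ : Fin d → Bool) (k : Fin d → ℤ × ℤ),
      ∑' n : ℤ × ℤ, (‖G n σ k‖₊ : ℝ≥0∞) * ‖monFactor d r σ k - monFactor d r' σ k‖₊
        ≤ (a : ℝ≥0∞) * ‖monFactor d r σ k - monFactor d r' σ k‖₊ := by
    intro σ k
    set n₀ : ℤ × ℤ := ∑ i, (if σ i then k i else -k i) with hn0
    have hbd : ∀ n : ℤ × ℤ, (‖G n σ k‖₊ : ℝ≥0∞) * ‖monFactor d r σ k - monFactor d r' σ k‖₊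
        ≤ if n = n₀ then (a : ℝ≥0∞) * ‖monFactor d r σ k - monFactor d r' σ k‖₊ else 0 := by
      intro n
      by_cases h : n = n₀
      · rw [if_pos h]
        exact mul_le_mul_left (haG n σ k) _
      · rw [if_neg h]
        have hz : G n σ k = 0 := by
          by_contra hne
          exact h (hG n σ k hne).symm
        simp [hz]
    exact le_trans (ENNReal.tsum_le_tsum hbd) (le_of_eq (tsum_ite_eq n₀ _))
  set L : ℝ≥0∞ := ∑' n : ℤ × ℤ, (‖XF d G r n - XF d G r' n‖₊ : ℝ≥0∞) with hLdef
  set R : ℝ≥0∞ := ((2 ^ d : ℕ) : ℝ≥0∞) * ((a : ℝ≥0∞) * ((d : ℝ≥0∞) * (D * S ^ (d - 1))))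
    with hRdef
  have main : L ≤ R := by
    calc L ≤ ∑' n : ℤ × ℤ, ∑ σ : Fin d → Bool, ∑' k : Fin d → ℤ × ℤ,
          (‖G n σ k‖₊ : ℝ≥0∞) * ‖monFactor d r σ k - monFactor d r' σ k‖₊ :=
        ENNReal.tsum_le_tsum fun n => XF_sub_nnnorm d G hA n hr hr' (hsumf n)
      _ = ∑ σ : Fin d → Bool, ∑' n : ℤ × ℤ, ∑' k : Fin d → ℤ × ℤ,
          (‖G n σ k‖₊ : ℝ≥0∞) * ‖monFactor d r σ k - monFactor d r' σ k‖₊ :=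
        Summable.tsum_finsetSum fun σ _ => ENNReal.summable
      _ = ∑ σ : Fin d → Bool, ∑' k : Fin d → ℤ × ℤ, ∑' n : ℤ × ℤ,
          (‖G n σ k‖₊ : ℝ≥0∞) * ‖monFactor d r σ k - monFactor d r' σ k‖₊ :=
        Finset.sum_congr rfl fun σ _ => ENNReal.tsum_comm
      _ ≤ ∑ σ : Fin d → Bool, ∑' k : Fin d → ℤ × ℤ,
          (a : ℝ≥0∞) * ‖monFactor d r σ k - monFactor d r' σ k‖₊ :=
        Finset.sum_le_sum fun σ _ => ENNReal.tsum_le_tsum (hmom σ)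
      _ = ∑ σ : Fin d → Bool, (a : ℝ≥0∞) * ∑' k : Fin d → ℤ × ℤ,
          (‖monFactor d r σ k - monFactor d r' σ k‖₊ : ℝ≥0∞) :=
        Finset.sum_congr rfl fun σ _ => ENNReal.tsum_mul_left
      _ ≤ ∑ σ : Fin d → Bool, (a : ℝ≥0∞) * ((d : ℝ≥0∞) * (D * S ^ (d - 1))) :=
        Finset.sum_le_sum fun σ _ => mul_le_mul_right (tsum_monFactor_sub d σ r r') _
      _ = R := by
        rw [Finset.sum_const, Finset.card_univ, nsmul_eq_mul, hRdef]
        congr 1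
        simp
  have hRtop : R ≠ ⊤ := by
    refine ENNReal.mul_ne_top (ENNReal.natCast_ne_top _) (ENNReal.mul_ne_top ENNReal.coe_ne_top
      (ENNReal.mul_ne_top (ENNReal.natCast_ne_top _) (ENNReal.mul_ne_top hD
        (ENNReal.pow_ne_top hS))))
  have hLr : ∑' n : ℤ × ℤ, ‖XF d G r n - XF d G r' n‖ = L.toReal := by
    rw [hLdef, ENNReal.tsum_toReal_eq (fun _ => ENNReal.coe_ne_top)]
    simp [coe_nnnorm]
  have hNr : N.toReal = ∑' n : ℤ × ℤ, ‖r n‖ := by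
    rw [hNdef, ENNReal.tsum_toReal_eq (fun _ => ENNReal.coe_ne_top)]
    simp [coe_nnnorm]
  have hN'r : N'.toReal = ∑' n : ℤ × ℤ, ‖r' n‖ := by
    rw [hN'def, ENNReal.tsum_toReal_eq (fun _ => ENNReal.coe_ne_top)]
    simp [coe_nnnorm]
  have hDr : D.toReal = ∑' n : ℤ × ℤ, ‖r n - r' n‖ := by
    rw [hDdef, ENNReal.tsum_toReal_eq (fun _ => ENNReal.coe_ne_top)]
    simp [coe_nnnorm]
  have hRr : R.toReal = ((2 ^ d * d : ℕ) : ℝ) * A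
      * ((∑' n : ℤ × ℤ, ‖r n‖) + ∑' n : ℤ × ℤ, ‖r' n‖) ^ (d - 1)
      * ∑' n : ℤ × ℤ, ‖r n - r' n‖ := by
    rw [hRdef]
    rw [ENNReal.toReal_mul, ENNReal.toReal_mul, ENNReal.toReal_mul, ENNReal.toReal_mul,
      ENNReal.toReal_pow, hSdef, ENNReal.toReal_add hN hN', hNr, hN'r, hDr,
      ENNReal.coe_toReal, ENNReal.toReal_natCast, ENNReal.toReal_natCast]
    have : (a : ℝ) = A := rfl
    rw [this]
    push_cast
    ring
  rw [hLr, ← hRr]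
  exact ENNReal.toReal_mono hRtop main
end

section
/- With F a momentum-preserving homogeneous Hamiltonian of degree d+1 and DX_F(r) the derivative of its vector field at r, the second-order Taylor estimate holds: ‖X_F(r') - X_F(r) - DX_F(r)[r'-r]‖_{ℓ¹} ≤ C(d)[[F]] (‖r‖_{ℓ¹} + ‖r'-r‖_{ℓ¹})^{d-2} ‖r'-r‖²_{ℓ¹}. -/
/-- The derivative `DX_F(r)[h]`: in each monomial, one factor of `r` is replaced
by `h`. -/
noncomputable def DXF (d : ℕ) (G : (ℤ × ℤ) → (Fin d → Bool) → (Fin d → ℤ × ℤ) → ℂ)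
    (r h : ℤ × ℤ → ℂ) (n : ℤ × ℤ) : ℂ :=
  ∑' σ : Fin d → Bool, ∑' k : Fin d → ℤ × ℤ, G n σ k *
    ∑ j : Fin d, ∏ i,
      if i = j then (if σ i then h (k i) else (starRingEnd ℂ) (h (k i)))
      else (if σ i then r (k i) else (starRingEnd ℂ) (r (k i)))

open Finset
open scoped ENNReal

section Expansion

variable {ι R : Type*} [Fintype ι] [DecidableEq ι]

theorem Fintype.prod_add_eq_sum_prod_ite [CommSemiring R] (a b : ι → R) :
    ∏ i, (a i + b i) = ∑ S : Finset ι, ∏ i, if i ∈ S then b i else a i := by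
  simp_rw [add_comm (a _), Fintype.prod_add]
  refine Finset.sum_congr rfl fun S _ => ?_
  rw [prod_ite, filter_univ_mem, filter_not, filter_univ_mem, compl_eq_univ_sdiff]

theorem Fintype.sum_finset_eq_add_sum_singleton_add_sum {M : Type*} [AddCommMonoid M]
    (f : Finset ι → M) :
    ∑ S, f S = f ∅ + ∑ j, f {j} + ∑ S with 2 ≤ #S, f S := by
  have hsmall : ({S | ¬2 ≤ #S} : Finset (Finset ι))
      = insert ∅ (univ.map ⟨_, singleton_injective⟩) := by
    ext S
    simp only [not_le, mem_filter_univ, mem_insert, mem_map, mem_univ, true_and,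
      Function.Embedding.coeFn_mk]
    rw [Nat.lt_succ_iff, Nat.le_one_iff_eq_zero_or_eq_one, Finset.card_eq_zero, Finset.card_eq_one]
    simp only [eq_comm]
  rw [← sum_filter_not_add_sum_filter _ (fun S => 2 ≤ #S), hsmall, sum_insert (by simp), sum_map]
  rfl

theorem Fintype.prod_add_eq_prod_add_sum_add_sum [CommSemiring R] (a b : ι → R) :
    ∏ i, (a i + b i) = ∏ i, a i + ∑ j, ∏ i, (if i = j then b i else a i)
      + ∑ S : Finset ι with 2 ≤ #S, ∏ i, if i ∈ S then b i else a i := by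
  rw [prod_add_eq_sum_prod_ite, sum_finset_eq_add_sum_singleton_add_sum]
  simp only [notMem_empty, if_false, mem_singleton]

end Expansion

theorem sum_two_le_card_pow_mul_pow_le {R : Type*} [CommSemiring R] [PartialOrder R]
    [CanonicallyOrderedAdd R] [IsOrderedRing R] (d : ℕ) (x y : R) :
    ∑ S : Finset (Fin d) with 2 ≤ #S, x ^ #S * y ^ (d - #S)
      ≤ 2 ^ d * ((x + y) ^ (d - 2) * x ^ 2) := by
  have hterm : ∀ S ∈ ({S | 2 ≤ #S} : Finset (Finset (Fin d))),
      x ^ #S * y ^ (d - #S) ≤ (x + y) ^ (d - 2) * x ^ 2 := by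
    intro S hS
    have h2 : 2 ≤ #S := (mem_filter.mp hS).2
    have hd : #S ≤ d := by simpa using card_le_univ S
    calc x ^ #S * y ^ (d - #S) = x ^ (#S - 2) * y ^ (d - #S) * x ^ 2 := by
          rw [mul_right_comm, ← pow_add, Nat.sub_add_cancel h2]
      _ ≤ (x + y) ^ (#S - 2) * (x + y) ^ (d - #S) * x ^ 2 := by
          gcongr
          · exact le_self_add
          · exact le_add_self
      _ = (x + y) ^ (d - 2) * x ^ 2 := by
          rw [← pow_add]; congr 2; omega
  calc _ ≤ #({S | 2 ≤ #S} : Finset (Finset (Fin d))) • ((x + y) ^ (d - 2) * x ^ 2) :=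
        sum_le_card_nsmul _ _ _ hterm
    _ ≤ 2 ^ d * ((x + y) ^ (d - 2) * x ^ 2) := by
        rw [nsmul_eq_mul]
        gcongr
        calc (#({S | 2 ≤ #S} : Finset (Finset (Fin d))) : R)
            ≤ (Fintype.card (Finset (Fin d)) : ℕ) := Nat.mono_cast (card_filter_le _ _)
          _ = 2 ^ d := by simp

namespace ENNReal

theorem tsum_pi_prod {ι : Type*} (d : ℕ) (w : Fin d → ι → ℝ≥0∞) :
    ∑' k : Fin d → ι, ∏ i, w i (k i) = ∏ i, ∑' x, w i x := by
  induction d with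
  | zero => simp [tsum_fintype]
  | succ d ih =>
    rw [← (Fin.consEquiv fun _ => ι).tsum_eq, ENNReal.tsum_prod', Fin.prod_univ_succ]
    simp_rw [Fin.consEquiv_apply, Fin.prod_univ_succ, Fin.cons_zero, Fin.cons_succ,
      ENNReal.tsum_mul_left, ENNReal.tsum_mul_right, ih]

theorem tsum_prod_ite_mem {ι : Type*} {d : ℕ} (S : Finset (Fin d)) (u v : ι → ℝ≥0∞) :
    ∑' k : Fin d → ι, ∏ i, (if i ∈ S then u (k i) else v (k i))
      = (∑' x, u x) ^ #S * (∑' x, v x) ^ (d - #S) := by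
  rw [tsum_pi_prod d fun i x => if i ∈ S then u x else v x]
  have hcol : ∀ i, ∑' x, (if i ∈ S then u x else v x) = if i ∈ S then ∑' x, u x else ∑' x, v x :=
    fun i => by split_ifs <;> rfl
  simp_rw [hcol, prod_ite, prod_const, filter_univ_mem, filter_not, filter_univ_mem,
    card_univ_sdiff, Fintype.card_fin]

end ENNReal

theorem enorm_prod {α β : Type*} [SeminormedCommRing α] [NormMulClass α] [NormOneClass α]
    (s : Finset β) (f : β → α) : ‖∏ b ∈ s, f b‖ₑ = ∏ b ∈ s, ‖f b‖ₑ := by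
  simp [enorm_eq_nnnorm]

theorem tsum_norm_eq_toReal_tsum_enorm {ι E : Type*} [SeminormedAddCommGroup E] (f : ι → E) :
    ∑' i, ‖f i‖ = (∑' i, ‖f i‖ₑ).toReal := by
  simp [ENNReal.tsum_toReal_eq fun _ => enorm_ne_top]

section FirstOrderExpansion

variable {ι 𝕜 : Type*} [NormedField 𝕜] [CompleteSpace 𝕜] {d : ℕ} {c : (Fin d → ι) → 𝕜} {A : ℝ}

theorem summable_mul_prod (hc : ∀ k, ‖c k‖ ≤ A) {u : Fin d → ι → 𝕜}
    (hu : ∀ i, Summable fun x => ‖u i x‖) :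
    Summable fun k => c k * ∏ i, u i (k i) := by
  have hprod : Summable fun k : Fin d → ι => ‖∏ i, u i (k i)‖ := by
    rw [← tsum_enorm_ne_top_iff_summable_norm]
    simp_rw [enorm_prod, ENNReal.tsum_pi_prod d fun i x => ‖u i x‖ₑ]
    exact ENNReal.prod_ne_top fun i _ => tsum_enorm_ne_top_iff_summable_norm.mpr (hu i)
  refine .of_norm_bounded (hprod.mul_left A) fun k => ?_
  rw [norm_mul]
  gcongr
  exact hc k

theorem tsum_mul_prod_add_sub_tsum_sub_tsum (hc : ∀ k, ‖c k‖ ≤ A) {a b : Fin d → ι → 𝕜}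
    (ha : ∀ i, Summable fun x => ‖a i x‖) (hb : ∀ i, Summable fun x => ‖b i x‖) :
    ∑' k, c k * ∏ i, (a i (k i) + b i (k i)) - ∑' k, c k * ∏ i, a i (k i)
        - ∑' k, c k * ∑ j, ∏ i, (if i = j then b i (k i) else a i (k i))
      = ∑' k, c k * ∑ S : Finset (Fin d) with 2 ≤ #S,
          ∏ i, if i ∈ S then b i (k i) else a i (k i) := by
  have hab : Summable fun k => c k * ∏ i, (a i (k i) + b i (k i)) :=
    summable_mul_prod hc (u := fun i x => a i x + b i x) fun i =>
      ((ha i).add (hb i)).of_nonneg_of_le (fun _ => norm_nonneg _) fun _ => norm_add_le _ _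
  have hlin : Summable fun k => c k * ∑ j, ∏ i, (if i = j then b i (k i) else a i (k i)) := by
    simp_rw [mul_sum]
    refine summable_sum fun j _ =>
      summable_mul_prod hc (u := fun i x => if i = j then b i x else a i x) fun i => ?_
    split_ifs
    exacts [hb i, ha i]
  rw [← hab.tsum_sub (summable_mul_prod hc ha), ← (hab.sub (summable_mul_prod hc ha)).tsum_sub hlin]
  refine tsum_congr fun k => ?_
  rw [Fintype.prod_add_eq_prod_add_sum_add_sum]
  ring

end FirstOrderExpansion

/-- `conjIf (σ i) z` is the paper's `z^{σᵢ}`. -/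
noncomputable def conjIf (b : Bool) : ℂ ≃ₗᵢ[ℝ] ℂ :=
  if b then LinearIsometryEquiv.refl ℝ ℂ else Complex.conjLIE

theorem conjIf_apply (b : Bool) (z : ℂ) : conjIf b z = if b then z else starRingEnd ℂ z := by
  cases b <;> rfl

/-- The part of `monFactor d (r + h) σ k` of degree at least two in `h`. -/
noncomputable def monRemainder (d : ℕ) (r h : ℤ × ℤ → ℂ) (σ : Fin d → Bool)
    (k : Fin d → ℤ × ℤ) : ℂ :=
  ∑ S : Finset (Fin d) with 2 ≤ #S,
    ∏ i, if i ∈ S then conjIf (σ i) (h (k i)) else conjIf (σ i) (r (k i))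

section Estimates

variable {d : ℕ} {G : (ℤ × ℤ) → (Fin d → Bool) → (Fin d → ℤ × ℤ) → ℂ} {A : ℝ}

theorem XF_add_sub_XF_sub_DXF (hA : ∀ n σ k, ‖G n σ k‖ ≤ A) {r h : ℤ × ℤ → ℂ}
    (hr : Summable fun n => ‖r n‖) (hh : Summable fun n => ‖h n‖) (n : ℤ × ℤ) :
    XF d G (r + h) n - XF d G r n - DXF d G r h n
      = ∑ σ, ∑' k, G n σ k * monRemainder d r h σ k := by
  simp only [XF, DXF, monFactor, monRemainder, tsum_fintype, ← conjIf_apply]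
  simp only [Pi.add_apply, map_add]
  rw [← sum_sub_distrib, ← sum_sub_distrib]
  refine Finset.sum_congr rfl fun σ _ => ?_
  have hrow : ∀ {f : ℤ × ℤ → ℂ}, Summable (‖f ·‖) → ∀ i,
      Summable fun x => ‖conjIf (σ i) (f x)‖ := fun hf i => by simpa using hf
  exact tsum_mul_prod_add_sub_tsum_sub_tsum (hA n σ) (a := fun i x => conjIf (σ i) (r x))
    (b := fun i x => conjIf (σ i) (h x)) (hrow hr) (hrow hh)

theorem tsum_enorm_le_of_momentum (hA : ∀ n σ k, ‖G n σ k‖ ≤ A)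
    (hmom : ∀ n σ k, G n σ k ≠ 0 → (∑ i, (if σ i then k i else -k i)) = n)
    (σ : Fin d → Bool) (k : Fin d → ℤ × ℤ) :
    ∑' n, ‖G n σ k‖ₑ ≤ ENNReal.ofReal A := by
  rw [tsum_eq_single (∑ i, if σ i then k i else -k i) fun n hn => ?_]
  · rw [← ofReal_norm]
    exact ENNReal.ofReal_le_ofReal (hA _ σ k)
  · rw [enorm_eq_zero]
    by_contra hG
    exact hn (hmom n σ k hG).symm

theorem tsum_enorm_monRemainder_le (r h : ℤ × ℤ → ℂ) (σ : Fin d → Bool) :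
    ∑' k, ‖monRemainder d r h σ k‖ₑ
      ≤ 2 ^ d * ((∑' n, ‖r n‖ₑ + ∑' n, ‖h n‖ₑ) ^ (d - 2) * (∑' n, ‖h n‖ₑ) ^ 2) := by
  calc ∑' k, ‖monRemainder d r h σ k‖ₑ
      ≤ ∑' k : Fin d → ℤ × ℤ, ∑ S : Finset (Fin d) with 2 ≤ #S,
          ∏ i, if i ∈ S then ‖h (k i)‖ₑ else ‖r (k i)‖ₑ := by
        refine ENNReal.tsum_le_tsum fun k => (enorm_sum_le _ _).trans_eq ?_
        simp [enorm_prod, apply_ite]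
    _ = ∑ S : Finset (Fin d) with 2 ≤ #S, (∑' n, ‖h n‖ₑ) ^ #S * (∑' n, ‖r n‖ₑ) ^ (d - #S) := by
        rw [Summable.tsum_finsetSum fun _ _ => ENNReal.summable]
        exact Finset.sum_congr rfl fun S _ =>
          ENNReal.tsum_prod_ite_mem S (fun x => ‖h x‖ₑ) (fun x => ‖r x‖ₑ)
    _ ≤ _ := by
        rw [add_comm (∑' n, ‖r n‖ₑ)]
        exact sum_two_le_card_pow_mul_pow_le d _ _

theorem tsum_enorm_XF_add_sub_XF_sub_DXF_le (hA : ∀ n σ k, ‖G n σ k‖ ≤ A)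
    (hmom : ∀ n σ k, G n σ k ≠ 0 → (∑ i, (if σ i then k i else -k i)) = n)
    {r h : ℤ × ℤ → ℂ} (hr : Summable fun n => ‖r n‖) (hh : Summable fun n => ‖h n‖) :
    ∑' n, ‖XF d G (r + h) n - XF d G r n - DXF d G r h n‖ₑ
      ≤ 4 ^ d * ENNReal.ofReal A * (∑' n, ‖r n‖ₑ + ∑' n, ‖h n‖ₑ) ^ (d - 2)
          * (∑' n, ‖h n‖ₑ) ^ 2 := by
  calc ∑' n, ‖XF d G (r + h) n - XF d G r n - DXF d G r h n‖ₑ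
      = ∑' n, ‖∑ σ, ∑' k, G n σ k * monRemainder d r h σ k‖ₑ := by
        simp_rw [XF_add_sub_XF_sub_DXF hA hr hh]
    _ ≤ ∑' n, ∑ σ, ∑' k, ‖G n σ k‖ₑ * ‖monRemainder d r h σ k‖ₑ := by
        refine ENNReal.tsum_le_tsum fun n => (enorm_sum_le _ _).trans (sum_le_sum fun σ _ => ?_)
        exact enorm_tsum_le_tsum_enorm.trans_eq (tsum_congr fun k => enorm_mul _ _)
    _ = ∑ σ, ∑' k, (∑' n, ‖G n σ k‖ₑ) * ‖monRemainder d r h σ k‖ₑ := by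
        rw [Summable.tsum_finsetSum fun _ _ => ENNReal.summable]
        simp_rw [ENNReal.tsum_comm (α := ℤ × ℤ), ENNReal.tsum_mul_right]
    _ ≤ ∑ σ : Fin d → Bool, ENNReal.ofReal A * (2 ^ d
          * ((∑' n, ‖r n‖ₑ + ∑' n, ‖h n‖ₑ) ^ (d - 2) * (∑' n, ‖h n‖ₑ) ^ 2)) := by
        refine sum_le_sum fun σ _ => ?_
        refine (ENNReal.tsum_le_tsum fun k =>
          mul_le_mul_left (tsum_enorm_le_of_momentum hA hmom σ k) _).trans ?_
        rw [ENNReal.tsum_mul_left]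
        gcongr
        exact tsum_enorm_monRemainder_le r h σ
    _ = _ := by
        simp only [sum_const, card_univ, Fintype.card_fun, Fintype.card_bool, Fintype.card_fin,
          nsmul_eq_mul, Nat.cast_pow, Nat.cast_ofNat]
        rw [show (4 : ℝ≥0∞) = 2 * 2 by norm_num, mul_pow]
        ring

end Estimates

theorem stmt10_general (d : ℕ) :
    ∃ C > (0 : ℝ),
      ∀ (G : (ℤ × ℤ) → (Fin d → Bool) → (Fin d → ℤ × ℤ) → ℂ) (A : ℝ),
        (∀ n σ k, ‖G n σ k‖ ≤ A) →
        (∀ n σ k, G n σ k ≠ 0 →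
          (∑ i, (if σ i then k i else -k i)) = n) →
        ∀ r r' : ℤ × ℤ → ℂ, Summable (fun n => ‖r n‖) →
          Summable (fun n => ‖r' n‖) →
          ∑' n : ℤ × ℤ,
              ‖XF d G r' n - XF d G r n - DXF d G r (fun m => r' m - r m) n‖
            ≤ C * A * ((∑' n : ℤ × ℤ, ‖r n‖) + ∑' n : ℤ × ℤ, ‖r' n - r n‖) ^ (d - 2)
              * (∑' n : ℤ × ℤ, ‖r' n - r n‖) ^ 2 := by
  refine ⟨4 ^ d, by positivity, fun G A hA hmom r r' hr hr' => ?_⟩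
  obtain ⟨h, rfl⟩ : ∃ h, r' = r + h := ⟨r' - r, (add_sub_cancel r r').symm⟩
  simp only [Pi.add_apply, add_sub_cancel_left]
  have hh : Summable fun n => ‖h n‖ :=
    (hr'.add hr).of_nonneg_of_le (fun _ => norm_nonneg _) fun n => by
      simpa using norm_sub_le ((r + h) n) (r n)
  have hA₀ : 0 ≤ A := (norm_nonneg _).trans (hA 0 (fun _ => true) fun _ => 0)
  have hR : ∑' n, ‖r n‖ₑ ≠ ∞ := tsum_enorm_ne_top_iff_summable_norm.mpr hr
  have hH : ∑' n, ‖h n‖ₑ ≠ ∞ := tsum_enorm_ne_top_iff_summable_norm.mpr hh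
  simp only [tsum_norm_eq_toReal_tsum_enorm]
  refine (ENNReal.toReal_mono (by finiteness)
    (tsum_enorm_XF_add_sub_XF_sub_DXF_le hA hmom hr hh)).trans_eq ?_
  simp [ENNReal.toReal_add hR hH, ENNReal.toReal_ofReal hA₀]

/-- Second-order Taylor estimate:
`‖X_F(r') - X_F(r) - DX_F(r)[r'-r]‖_{ℓ¹} ≤ C(d)[[F]](‖r‖+‖r'-r‖)^{d-2}‖r'-r‖²`. -/
theorem stmt10 (d : ℕ) (hd : 2 ≤ d) :
    ∃ C > (0 : ℝ),
      ∀ (G : (ℤ × ℤ) → (Fin d → Bool) → (Fin d → ℤ × ℤ) → ℂ) (A : ℝ),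
        (∀ n σ k, ‖G n σ k‖ ≤ A) →
        (∀ n σ k, G n σ k ≠ 0 →
          (∑ i, (if σ i then k i else -k i)) = n) →
        ∀ r r' : ℤ × ℤ → ℂ, Summable (fun n => ‖r n‖) →
          Summable (fun n => ‖r' n‖) →
          ∑' n : ℤ × ℤ,
              ‖XF d G r' n - XF d G r n - DXF d G r (fun m => r' m - r m) n‖
            ≤ C * A * ((∑' n : ℤ × ℤ, ‖r n‖) + ∑' n : ℤ × ℤ, ‖r' n - r n‖) ^ (d - 2)
              * (∑' n : ℤ × ℤ, ‖r' n - r n‖) ^ 2 :=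
  stmt10_general d
end
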